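/- arXiv:1701.03182 — 2 statements merged into one kernel-verified Lean document; each statement's English description precedes it below -/
import Mathlib

section
/- For every C⁴ complex-valued function u on an open subset of ℝ^{2n+1}, the identity ½ Σ_{j,k=1}^n ( Z̄_jZ̄_k(Z_jZ_k u) + Z_jZ_k(Z̄_jZ̄_k u) ) = L_{−√(n(n+2))}( L_{√(n(n+2))} u ) holds pointwise. -/
open Set Matrix MeasureTheory

noncomputable section

/-- The underlying space of the `n`-th Heisenberg group: `ℝ^(2n+1)` with coordinates
`(x_1,…,x_n,y_1,…,y_n,t)`. -/
abbrev Heis (n : ℕ) := Fin (2*n+1) → ℝ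

/-- Index of the coordinate `x_j`. -/
def xIdx {n : ℕ} (j : Fin n) : Fin (2*n+1) := ⟨j.1, by have := j.2; omega⟩

/-- Index of the coordinate `y_j`. -/
def yIdx {n : ℕ} (j : Fin n) : Fin (2*n+1) := ⟨n + j.1, by have := j.2; omega⟩

/-- Index of the coordinate `t`. -/
def tIdx {n : ℕ} : Fin (2*n+1) := ⟨2*n, by omega⟩

/-- The index `k ∈ {1,…,2n}` viewed inside `{1,…,2n+1}`. -/
def hIdx {n : ℕ} (k : Fin (2*n)) : Fin (2*n+1) := ⟨k.1, by have := k.2; omega⟩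

variable {n : ℕ} {E : Type*} [NormedAddCommGroup E] [NormedSpace ℝ E]

/-- Partial derivative `∂u/∂p_i`. -/
def pd (i : Fin (2*n+1)) (u : Heis n → E) (p : Heis n) : E :=
  fderiv ℝ u p (Pi.single i 1)

/-- The left-invariant vector field `X_j = ∂/∂x_j + 2 y_j ∂/∂t` as a differential operator. -/
def Xop (j : Fin n) (u : Heis n → E) (p : Heis n) : E :=
  pd (xIdx j) u p + (2 * p (yIdx j)) • pd tIdx u p

/-- The left-invariant vector field `Y_j = ∂/∂y_j - 2 x_j ∂/∂t` as a differential operator. -/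
def Yop (j : Fin n) (u : Heis n → E) (p : Heis n) : E :=
  pd (yIdx j) u p - (2 * p (xIdx j)) • pd tIdx u p

/-- The vector field `T = ∂/∂t`. -/
def Tvf (u : Heis n → E) (p : Heis n) : E := pd tIdx u p

/-- `X_k` for `k = 1,…,2n`, where `X_{n+j} = Y_j`. -/
def XYop (k : Fin (2*n)) (u : Heis n → E) (p : Heis n) : E :=
  if h : (k : ℕ) < n then Xop ⟨k.1, h⟩ u p
  else Yop ⟨k.1 - n, by have := k.2; omega⟩ u p

/-- The right-invariant mirror `X̃_j = X_j - 4 y_j T`. -/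
def Xtilde (j : Fin n) (u : Heis n → E) (p : Heis n) : E :=
  Xop j u p - (4 * p (yIdx j)) • Tvf u p

/-- The right-invariant mirror `Ỹ_j = Y_j + 4 x_j T`. -/
def Ytilde (j : Fin n) (u : Heis n → E) (p : Heis n) : E :=
  Yop j u p + (4 * p (xIdx j)) • Tvf u p

/-- The complexified horizontal operator `Z_j = ½(X_j - i Y_j)`. -/
def Zop (j : Fin n) (u : Heis n → ℂ) (p : Heis n) : ℂ :=
  (1/2 : ℂ) * (Xop j u p - Complex.I * Yop j u p)

/-- The complexified horizontal operator `Z̄_j = ½(X_j + i Y_j)`. -/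
def Zbar (j : Fin n) (u : Heis n → ℂ) (p : Heis n) : ℂ :=
  (1/2 : ℂ) * (Xop j u p + Complex.I * Yop j u p)

/-- The operator `L_c = -¼ Σ_j (X_j² + Y_j²) + c T`. -/
def Lop (c : ℝ) (u : Heis n → ℂ) (p : Heis n) : ℂ :=
  -(1/4 : ℂ) * (∑ j : Fin n, (Xop j (Xop j u) p + Yop j (Yop j u) p)) + (c : ℂ) * Tvf u p

/-- The Heisenberg group law
`(x,y,t)*(x',y',t') = (x+x', y+y', t+t'-2x·y'+2x'·y)`. -/
def hmul (p q : Heis n) : Heis n := fun i =>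
  if (i : ℕ) < 2*n then p i + q i
  else p i + q i - 2 * ∑ j : Fin n, p (xIdx j) * q (yIdx j)
    + 2 * ∑ j : Fin n, q (xIdx j) * p (yIdx j)

/-- The point `exp(s X_j) = (s e_j, 0, 0)`. -/
def expX (j : Fin n) (s : ℝ) : Heis n := fun i => if i = xIdx j then s else 0

/-- The point `exp(s Y_j) = (0, s e_j, 0)`. -/
def expY (j : Fin n) (s : ℝ) : Heis n := fun i => if i = yIdx j then s else 0

/-- The point `exp(s T) = (0, 0, s)`. -/
def expT {n : ℕ} (s : ℝ) : Heis n := fun i => if i = tIdx then s else 0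

/-- The standard contact form `α = dt + 2 Σ_k (x_k dy_k - y_k dx_k)` evaluated at the point `p`
on the tangent vector `v`. -/
def alphaForm (p v : Heis n) : ℝ :=
  v tIdx + 2 * ∑ j : Fin n, (p (xIdx j) * v (yIdx j) - p (yIdx j) * v (xIdx j))

/-- `F` is a contact map on `U` with (positive) contact factor `lam`: `F^*α = lam · α`. -/
def IsContact (U : Set (Heis n)) (F : Heis n → Heis n) (lam : Heis n → ℝ) : Prop :=
  (∀ p ∈ U, 0 < lam p) ∧
  ∀ p ∈ U, ∀ v : Heis n, alphaForm (F p) (fderiv ℝ F p v) = lam p * alphaForm p v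

/-- The horizontal differential `D₀F`, the `2n × 2n` matrix with entries `(D₀F)_{m,ℓ} = X_ℓ f_m`. -/
def D0 (F : Heis n → Heis n) (p : Heis n) : Matrix (Fin (2*n)) (Fin (2*n)) ℝ :=
  Matrix.of fun m ℓ => XYop ℓ (fun q => F q (hIdx m)) p

/-- The horizontal Jacobian `J₀F = det D₀F`. -/
def J0 (F : Heis n → Heis n) (p : Heis n) : ℝ := (D0 F p).det

/-- `F` is conformal on `U` with contact factor `lam`: `F` is contact, `J₀F > 0`, and
`(D₀F)ᵀ (D₀F) = (J₀F)^{1/n} I_{2n}`. -/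
def IsConformal (U : Set (Heis n)) (F : Heis n → Heis n) (lam : Heis n → ℝ) : Prop :=
  IsContact U F lam ∧ (∀ p ∈ U, 0 < J0 F p) ∧
  ∀ p ∈ U, (D0 F p)ᵀ * (D0 F p) = (J0 F p ^ (1 / (n : ℝ))) • (1 : Matrix (Fin (2*n)) (Fin (2*n)) ℝ)

/-- The full Jacobian matrix of `F : ℝ^{2n+1} → ℝ^{2n+1}` at `p`. -/
def fullJac (F : Heis n → Heis n) (p : Heis n) : Matrix (Fin (2*n+1)) (Fin (2*n+1)) ℝ :=
  Matrix.of fun i j => pd j (fun q => F q i) p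

end

/-!
Put `P = Σ_j Z_j Z̄_j` and `P̄ = Σ_j Z̄_j Z_j`. Left-invariant vector fields satisfy
`[X_a, X_b] = -4 ω(a, b) T` for the symplectic form `ω` of the horizontal coordinates,
hence `[Z̄_k, Z_j] = 2i δ_jk T`, and `T` commutes with every `Z_j` and `Z̄_j`.
Commuting the two middle factors gives `Σ_{j,k} Z̄_j Z̄_k Z_j Z_k = P̄² + 2i T P̄` and
`Σ_{j,k} Z_j Z_k Z̄_j Z̄_k = P² - 2i T P`, while `P̄ = P + 2in T` and `L_c = -P + (c - in) T`.
So both sides of the identity equal `P² + 2in T P - 2n(n+1) T²`, the right one because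
`c² + n² = 2n(n+1)` for `c = √(n(n+2))`.
-/

open Complex Filter Topology VectorField
open scoped ContDiff

theorem ContDiffOn.differentiableAt_of_isOpen {E F : Type*} [NormedAddCommGroup E]
    [NormedSpace ℝ E] [NormedAddCommGroup F] [NormedSpace ℝ F] {f : E → F} {s : Set E} {x : E}
    {n : WithTop ℕ∞} (hf : ContDiffOn ℝ n f s) (hs : IsOpen s) (hn : n ≠ 0) (hx : x ∈ s) :
    DifferentiableAt ℝ f x :=
  (hf.differentiableOn hn).differentiableAt (hs.mem_nhds hx)

structure ComplexVectorField (E : Type*) [NormedAddCommGroup E] [NormedSpace ℝ E] where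
  re : E → E
  im : E → E
  contDiff_re : ContDiff ℝ ∞ re
  contDiff_im : ContDiff ℝ ∞ im

namespace ComplexVectorField

variable {E : Type*} [NormedAddCommGroup E] [NormedSpace ℝ E] {f g h u : E → ℂ} {x : E}
  {V : Set E}

noncomputable def deriv (Z : ComplexVectorField E) (f : E → ℂ) (x : E) : ℂ :=
  fderiv ℝ f x (Z.re x) + I * fderiv ℝ f x (Z.im x)

section Calculus

variable (Z W : ComplexVectorField E)

theorem differentiableAt_re : DifferentiableAt ℝ Z.re x :=
  (Z.contDiff_re.differentiable (by simp)).differentiableAt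

theorem differentiableAt_im : DifferentiableAt ℝ Z.im x :=
  (Z.contDiff_im.differentiable (by simp)).differentiableAt

theorem deriv_congr_of_eventuallyEq (hfg : f =ᶠ[𝓝 x] g) : Z.deriv f x = Z.deriv g x := by
  simp only [deriv, hfg.fderiv_eq]

theorem deriv_add (hf : DifferentiableAt ℝ f x) (hg : DifferentiableAt ℝ g x) :
    Z.deriv (f + g) x = Z.deriv f x + Z.deriv g x := by
  simp only [deriv, fderiv_add hf hg, _root_.add_apply]
  ring

theorem deriv_smul (c : ℂ) (hf : DifferentiableAt ℝ f x) :
    Z.deriv (c • f) x = c * Z.deriv f x := by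
  simp only [deriv, fderiv_const_smul hf, _root_.smul_apply, smul_eq_mul]
  ring

theorem deriv_sum {ι : Type*} (s : Finset ι) (g : ι → E → ℂ)
    (hg : ∀ i ∈ s, DifferentiableAt ℝ (g i) x) :
    Z.deriv (∑ i ∈ s, g i) x = ∑ i ∈ s, Z.deriv (g i) x := by
  simp only [deriv, fderiv_sum hg, _root_.sum_apply, Finset.sum_add_distrib, Finset.mul_sum]

theorem deriv_eq_of_eqOn (hV : IsOpen V) (hx : x ∈ V) (a b : ℂ)
    (hfgh : EqOn f (a • g + b • h) V) (hg : DifferentiableAt ℝ g x)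
    (hh : DifferentiableAt ℝ h x) :
    Z.deriv f x = a * Z.deriv g x + b * Z.deriv h x := by
  rw [Z.deriv_congr_of_eventuallyEq (eventuallyEq_of_mem (hV.mem_nhds hx) hfgh),
    Z.deriv_add (hg.const_smul a) (hh.const_smul b), Z.deriv_smul a hg, Z.deriv_smul b hh]

theorem contDiffOn_deriv (hV : IsOpen V) {m : ℕ∞} (hf : ContDiffOn ℝ (m + 1) f V) :
    ContDiffOn ℝ m (Z.deriv f) V := by
  have hdf : ContDiffOn ℝ m (fderiv ℝ f) V := hf.fderiv_of_isOpen hV le_rfl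
  have hm : (m : WithTop ℕ∞) ≤ ∞ := by exact_mod_cast le_top
  exact (hdf.clm_apply (Z.contDiff_re.of_le hm).contDiffOn).add
    (contDiffOn_const.mul (hdf.clm_apply (Z.contDiff_im.of_le hm).contDiffOn))

theorem deriv_deriv_sub_deriv_deriv (hf : ContDiffAt ℝ 2 f x) :
    Z.deriv (W.deriv f) x - W.deriv (Z.deriv f) x =
      fderiv ℝ f x (lieBracket ℝ Z.re W.re x - lieBracket ℝ Z.im W.im x)
        + I * fderiv ℝ f x (lieBracket ℝ Z.re W.im x + lieBracket ℝ Z.im W.re x) := by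
  have hdf : DifferentiableAt ℝ (fderiv ℝ f) x :=
    (hf.fderiv_right (m := 1) (by norm_num)).differentiableAt one_ne_zero
  have hcomp (U U' : ComplexVectorField E) : U.deriv (U'.deriv f) x =
      fderiv ℝ (fun y => fderiv ℝ f y (U'.re y)) x (U.re x)
        + I * fderiv ℝ (fun y => fderiv ℝ f y (U'.re y)) x (U.im x)
        + I * (fderiv ℝ (fun y => fderiv ℝ f y (U'.im y)) x (U.re x)
        + I * fderiv ℝ (fun y => fderiv ℝ f y (U'.im y)) x (U.im x)) := by
    change U.deriv ((fun y => fderiv ℝ f y (U'.re y)) + I • fun y => fderiv ℝ f y (U'.im y)) x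
      = _
    rw [U.deriv_add (hdf.clm_apply U'.differentiableAt_re)
      ((hdf.clm_apply U'.differentiableAt_im).const_smul I),
      U.deriv_smul I (hdf.clm_apply U'.differentiableAt_im)]
    rfl
  have hbr {A B : E → E} (hA : DifferentiableAt ℝ A x) (hB : DifferentiableAt ℝ B x) :=
    fderiv_apply_lieBracket hf (by simp) hB hA
  rw [hcomp, hcomp, map_sub, map_add, hbr Z.differentiableAt_re W.differentiableAt_re,
    hbr Z.differentiableAt_im W.differentiableAt_im,
    hbr Z.differentiableAt_re W.differentiableAt_im,
    hbr Z.differentiableAt_im W.differentiableAt_re]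
  linear_combination (fderiv ℝ (fun y => fderiv ℝ f y (W.im y)) x (Z.im x)
    - fderiv ℝ (fun y => fderiv ℝ f y (Z.im y)) x (W.im x)) * I_sq

end Calculus

def BracketEq (Z W : ComplexVectorField E) (c : ℂ) (T : ComplexVectorField E) : Prop :=
  ∀ (f : E → ℂ) x, ContDiffAt ℝ 2 f x →
    Z.deriv (W.deriv f) x - W.deriv (Z.deriv f) x = c * T.deriv f x

theorem BracketEq.deriv_deriv {Z W T : ComplexVectorField E} {c : ℂ} (hZW : BracketEq Z W c T)
    (hf : ContDiffAt ℝ 2 f x) :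
    Z.deriv (W.deriv f) x = W.deriv (Z.deriv f) x + c * T.deriv f x := by
  rw [← hZW f x hf]
  ring

section SumDerivDeriv

variable {ι : Type*} [Fintype ι] (B A : ι → ComplexVectorField E)

noncomputable def sumDerivDeriv (f : E → ℂ) : E → ℂ := ∑ j, (B j).deriv ((A j).deriv f)

theorem sumDerivDeriv_apply : sumDerivDeriv B A f x = ∑ j, (B j).deriv ((A j).deriv f) x :=
  Finset.sum_apply ..

theorem contDiffOn_sumDerivDeriv (hV : IsOpen V) {m : ℕ∞} (hf : ContDiffOn ℝ (m + 2) f V) :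
    ContDiffOn ℝ m (sumDerivDeriv B A f) V := by
  rw [sumDerivDeriv, Finset.sum_fn]
  exact ContDiffOn.sum fun j _ => (B j).contDiffOn_deriv hV ((A j).contDiffOn_deriv hV
    (m := m + 1) (by simpa [add_assoc, one_add_one_eq_two] using hf))

theorem sumDerivDeriv_eq_of_eqOn (hV : IsOpen V) (hx : x ∈ V) (a b : ℂ)
    (hfgh : EqOn f (a • g + b • h) V) (hg : ContDiffOn ℝ 2 g V) (hh : ContDiffOn ℝ 2 h V) :
    sumDerivDeriv B A f x = a * sumDerivDeriv B A g x + b * sumDerivDeriv B A h x := by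
  have hA (j : ι) : EqOn ((A j).deriv f) (a • (A j).deriv g + b • (A j).deriv h) V :=
    fun y hy => (A j).deriv_eq_of_eqOn hV hy a b hfgh
      (hg.differentiableAt_of_isOpen hV (by norm_num) hy)
      (hh.differentiableAt_of_isOpen hV (by norm_num) hy)
  simp only [sumDerivDeriv_apply, Finset.mul_sum, ← Finset.sum_add_distrib]
  exact Finset.sum_congr rfl fun j _ => (B j).deriv_eq_of_eqOn hV hx a b (hA j)
    (((A j).contDiffOn_deriv hV (m := 1) hg).differentiableAt_of_isOpen hV one_ne_zero hx)
    (((A j).contDiffOn_deriv hV (m := 1) hh).differentiableAt_of_isOpen hV one_ne_zero hx)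

variable {B A} {T : ComplexVectorField E} {κ : ℂ}

theorem sumDerivDeriv_swap [DecidableEq ι]
    (hBA : ∀ j k, BracketEq (B k) (A j) (if j = k then κ else 0) T) (hf : ContDiffAt ℝ 2 f x) :
    sumDerivDeriv B A f x = sumDerivDeriv A B f x + (Fintype.card ι * κ) * T.deriv f x := by
  simp only [sumDerivDeriv_apply, fun j => (hBA j j).deriv_deriv hf, if_true,
    Finset.sum_add_distrib, Finset.sum_const, Finset.card_univ, nsmul_eq_mul]
  ring

theorem deriv_sumDerivDeriv_comm (hV : IsOpen V) (hx : x ∈ V)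
    (hTB : ∀ j, BracketEq T (B j) 0 T) (hTA : ∀ j, BracketEq T (A j) 0 T)
    (hf : ContDiffOn ℝ 3 f V) :
    T.deriv (sumDerivDeriv B A f) x = sumDerivDeriv B A (T.deriv f) x := by
  have hAf (j : ι) : ContDiffOn ℝ 2 ((A j).deriv f) V := (A j).contDiffOn_deriv hV (m := 2) hf
  rw [sumDerivDeriv, T.deriv_sum _ _ fun j _ => ((B j).contDiffOn_deriv hV (m := 1)
    (hAf j)).differentiableAt_of_isOpen hV one_ne_zero hx, sumDerivDeriv_apply]
  refine Finset.sum_congr rfl fun j _ => ?_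
  rw [(hTB j).deriv_deriv ((hAf j).contDiffAt (hV.mem_nhds hx)), zero_mul, add_zero]
  refine (B j).deriv_congr_of_eventuallyEq (eventuallyEq_of_mem (hV.mem_nhds hx) fun y hy => ?_)
  simpa using (hTA j).deriv_deriv ((hf.of_le (by norm_num)).contDiffAt (hV.mem_nhds hy))

theorem sum_sum_deriv_deriv_deriv_deriv [DecidableEq ι] (hV : IsOpen V) (hx : x ∈ V)
    (hBA : ∀ j k, BracketEq (B k) (A j) (if j = k then κ else 0) T)
    (hTB : ∀ j, BracketEq T (B j) 0 T) (hu : ContDiffOn ℝ 4 u V) :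
    ∑ j, ∑ k, (B j).deriv ((B k).deriv ((A j).deriv ((A k).deriv u))) x
      = sumDerivDeriv B A (sumDerivDeriv B A u) x + κ * T.deriv (sumDerivDeriv B A u) x := by
  have hAu (k : ι) : ContDiffOn ℝ 3 ((A k).deriv u) V := (A k).contDiffOn_deriv hV (m := 3) hu
  have hBAu (k : ι) : ContDiffOn ℝ 2 ((B k).deriv ((A k).deriv u)) V :=
    (B k).contDiffOn_deriv hV (m := 2) (hAu k)
  have hBAAu (j k : ι) : ContDiffOn ℝ 1 ((B k).deriv ((A j).deriv ((A k).deriv u))) V :=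
    (B k).contDiffOn_deriv hV (m := 1) ((A j).contDiffOn_deriv hV (m := 2) (hAu k))
  have hSu : ContDiffOn ℝ 2 (sumDerivDeriv B A u) V := contDiffOn_sumDerivDeriv B A hV (m := 2) hu
  -- commuting each `B_k` past `A_j` leaves a single `T`-term, from `k = j`
  have hinner (j : ι) : EqOn (∑ k, (B k).deriv ((A j).deriv ((A k).deriv u)))
      ((1 : ℂ) • (A j).deriv (sumDerivDeriv B A u) + κ • T.deriv ((A j).deriv u)) V := by
    intro y hy
    simp only [Finset.sum_apply, fun k => (hBA j k).deriv_deriv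
      (((hAu k).of_le (by norm_num)).contDiffAt (hV.mem_nhds hy)), Finset.sum_add_distrib, ite_mul,
      zero_mul, Finset.sum_ite_eq, Finset.mem_univ, if_true, Pi.add_apply, Pi.smul_apply,
      smul_eq_mul, one_mul]
    rw [sumDerivDeriv, (A j).deriv_sum _ _ fun k _ =>
      (hBAu k).differentiableAt_of_isOpen hV (by norm_num) hy]
  have houter (j : ι) : ∑ k, (B j).deriv ((B k).deriv ((A j).deriv ((A k).deriv u))) x
      = (B j).deriv ((A j).deriv (sumDerivDeriv B A u)) x
        + κ * T.deriv ((B j).deriv ((A j).deriv u)) x := by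
    rw [← (B j).deriv_sum _ _ fun k _ => (hBAAu j k).differentiableAt_of_isOpen hV one_ne_zero hx,
      (B j).deriv_eq_of_eqOn hV hx 1 κ (hinner j)
        (((A j).contDiffOn_deriv hV (m := 1) hSu).differentiableAt_of_isOpen hV one_ne_zero hx)
        ((T.contDiffOn_deriv hV (m := 2) (hAu j)).differentiableAt_of_isOpen hV (by norm_num) hx),
      (hTB j).deriv_deriv (((hAu j).of_le (by norm_num)).contDiffAt (hV.mem_nhds hx))]
    ring
  rw [Finset.sum_congr rfl fun j _ => houter j, Finset.sum_add_distrib, ← Finset.mul_sum,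
    sumDerivDeriv_apply, sumDerivDeriv, T.deriv_sum _ _ fun j _ =>
      (hBAu j).differentiableAt_of_isOpen hV (by norm_num) hx]

end SumDerivDeriv

end ComplexVectorField

namespace Heisenberg

open ComplexVectorField

variable {n : ℕ} {f u : Heis n → ℂ} {x : Heis n} {V : Set (Heis n)}

@[simp] theorem xIdx_inj {j k : Fin n} : xIdx j = xIdx k ↔ j = k := by
  simp [xIdx, Fin.ext_iff]

@[simp] theorem yIdx_inj {j k : Fin n} : yIdx j = yIdx k ↔ j = k := by
  simp [yIdx, Fin.ext_iff]

@[simp] theorem xIdx_ne_yIdx {j k : Fin n} : xIdx j ≠ yIdx k := by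
  simp [xIdx, yIdx, Fin.ext_iff]; omega

@[simp] theorem yIdx_ne_xIdx {j k : Fin n} : yIdx j ≠ xIdx k := by
  simp [xIdx, yIdx, Fin.ext_iff]; omega

@[simp] theorem xIdx_ne_tIdx {j : Fin n} : xIdx j ≠ tIdx := by
  simp [xIdx, tIdx, Fin.ext_iff]; omega

@[simp] theorem yIdx_ne_tIdx {j : Fin n} : yIdx j ≠ tIdx := by
  simp [yIdx, tIdx, Fin.ext_iff]; omega

abbrev e (i : Fin (2*n+1)) : Heis n := Pi.single i 1

noncomputable def symp (a : Heis n) : Heis n →L[ℝ] ℝ :=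
  ∑ j, (a (xIdx j) • ContinuousLinearMap.proj (yIdx j)
    - a (yIdx j) • ContinuousLinearMap.proj (xIdx j))

theorem symp_apply (a q : Heis n) :
    symp a q = ∑ j, (a (xIdx j) * q (yIdx j) - a (yIdx j) * q (xIdx j)) := by
  simp [symp]

theorem symp_swap (a b : Heis n) : symp b a = -symp a b := by
  simp only [symp_apply, ← Finset.sum_neg_distrib]
  exact Finset.sum_congr rfl fun _ _ => by ring

@[simp] theorem symp_e_tIdx (a : Heis n) : symp a (e tIdx) = 0 := by
  simp [symp_apply]

@[simp] theorem symp_e_tIdx_left (q : Heis n) : symp (e tIdx) q = 0 := by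
  simp [symp_apply]

@[simp] theorem symp_zero (q : Heis n) : symp 0 q = 0 := by
  simp [symp_apply]

/-- The left-invariant vector field equal to `a` at the origin. -/
noncomputable def heisField (a q : Heis n) : Heis n := a + (2 * symp a q) • e tIdx

theorem hasFDerivAt_heisField (a q : Heis n) :
    HasFDerivAt (heisField a) ((2 • symp a).smulRight (e tIdx : Heis n)) q := by
  have h : heisField a = fun q => a + (2 • symp a).smulRight (e tIdx : Heis n) q := by
    ext1 q
    simp [heisField, mul_smul]
  rw [h]
  exact (ContinuousLinearMap.hasFDerivAt _).const_add a

theorem contDiff_heisField (a : Heis n) : ContDiff ℝ ∞ (heisField a) := by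
  unfold heisField
  fun_prop

theorem lieBracket_heisField (a b q : Heis n) :
    lieBracket ℝ (heisField a) (heisField b) q = (-4 * symp a b) • e tIdx := by
  simp only [lieBracket, (hasFDerivAt_heisField _ q).fderiv, ContinuousLinearMap.smulRight_apply,
    heisField, map_add, map_smul, symp_e_tIdx, smul_zero, symp_swap b a, _root_.smul_apply]
  module

noncomputable def heisCField (a b : Heis n) : ComplexVectorField (Heis n) :=
  ⟨heisField a, heisField b, contDiff_heisField a, contDiff_heisField b⟩

theorem heisCField_deriv (a b : Heis n) (f : Heis n → ℂ) (q : Heis n) :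
    (heisCField a b).deriv f q
      = fderiv ℝ f q (heisField a q) + I * fderiv ℝ f q (heisField b q) :=
  rfl

noncomputable abbrev tField : ComplexVectorField (Heis n) := heisCField (e tIdx) 0

noncomputable abbrev xField (j : Fin n) : ComplexVectorField (Heis n) := heisCField (e (xIdx j)) 0

noncomputable abbrev yField (j : Fin n) : ComplexVectorField (Heis n) := heisCField (e (yIdx j)) 0

noncomputable abbrev zField (j : Fin n) : ComplexVectorField (Heis n) :=
  heisCField ((1 / 2 : ℝ) • e (xIdx j)) ((-1 / 2 : ℝ) • e (yIdx j))

noncomputable abbrev zbarField (j : Fin n) : ComplexVectorField (Heis n) :=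
  heisCField ((1 / 2 : ℝ) • e (xIdx j)) ((1 / 2 : ℝ) • e (yIdx j))

theorem Tvf_eq_deriv : Tvf = (tField (n := n)).deriv := by
  ext f q
  simp [heisCField_deriv, heisField, Tvf, pd]

theorem Xop_eq_deriv (j : Fin n) : Xop j = (xField j).deriv := by
  ext f q
  simp [heisCField_deriv, heisField, Xop, pd, symp_apply, Pi.single_apply]

theorem Yop_eq_deriv (j : Fin n) : Yop j = (yField j).deriv := by
  ext f q
  simp [heisCField_deriv, heisField, Yop, pd, symp_apply, Pi.single_apply, e]
  ring

theorem Zop_eq_deriv (j : Fin n) : Zop j = (zField j).deriv := by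
  ext f q
  simp [heisCField_deriv, heisField, Zop, Xop, Yop, pd, symp_apply, Pi.single_apply, e]
  ring

theorem Zbar_eq_deriv (j : Fin n) : Zbar j = (zbarField j).deriv := by
  ext f q
  simp [heisCField_deriv, heisField, Zbar, Xop, Yop, pd, symp_apply, Pi.single_apply, e]
  ring

theorem bracketEq_heisCField (a b c d : Heis n) :
    BracketEq (heisCField a b) (heisCField c d)
      (-4 * (symp a c - symp b d + I * (symp a d + symp b c))) tField := by
  intro f x hf
  rw [deriv_deriv_sub_deriv_deriv _ _ hf, ← Tvf_eq_deriv]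
  simp [heisCField, lieBracket_heisField, Tvf, pd]
  ring

theorem bracketEq_zbarField_zField (j k : Fin n) :
    BracketEq (zbarField k) (zField j) (if j = k then 2 * I else 0) tField := by
  convert bracketEq_heisCField _ _ _ _ using 1
  simp [symp_apply, Pi.single_apply, e]
  split_ifs <;> push_cast <;> ring

theorem bracketEq_zField_zbarField (j k : Fin n) :
    BracketEq (zField k) (zbarField j) (if j = k then -2 * I else 0) tField := by
  convert bracketEq_heisCField _ _ _ _ using 1
  simp [symp_apply, Pi.single_apply, e]
  split_ifs <;> push_cast <;> ring

theorem bracketEq_tField (a b : Heis n) : BracketEq tField (heisCField a b) 0 tField := by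
  convert bracketEq_heisCField _ _ _ _ using 1
  simp [symp_apply, e]

theorem Xop_Xop_add_Yop_Yop (hV : IsOpen V) (hf : ContDiffOn ℝ 2 f V) (hx : x ∈ V) (j : Fin n) :
    Xop j (Xop j f) x + Yop j (Yop j f) x = 2 * (Zop j (Zbar j f) x + Zbar j (Zop j f) x) := by
  have hdiff (D : ComplexVectorField (Heis n)) : DifferentiableAt ℝ (D.deriv f) x :=
    (D.contDiffOn_deriv hV (m := 1) hf).differentiableAt_of_isOpen hV one_ne_zero hx
  have hlin (D : ComplexVectorField (Heis n)) (a b : ℂ) :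
      D.deriv (a • Xop j f + b • Yop j f) x
        = a * D.deriv (Xop j f) x + b * D.deriv (Yop j f) x := by
    rw [Xop_eq_deriv, Yop_eq_deriv]
    exact D.deriv_eq_of_eqOn isOpen_univ (mem_univ x) a b (fun _ _ => rfl) (hdiff _) (hdiff _)
  have hZbar : Zbar j f = (1 / 2 : ℂ) • Xop j f + (I / 2) • Yop j f := by
    ext q; simp only [Zbar, Pi.add_apply, Pi.smul_apply, smul_eq_mul]; ring
  have hZ : Zop j f = (1 / 2 : ℂ) • Xop j f + (-I / 2) • Yop j f := by
    ext q; simp only [Zop, Pi.add_apply, Pi.smul_apply, smul_eq_mul]; ring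
  have hX := hlin (xField j)
  have hY := hlin (yField j)
  rw [← Xop_eq_deriv] at hX
  rw [← Yop_eq_deriv] at hY
  rw [Zop, Zbar, hZbar, hZ, hX, hX, hY, hY]
  linear_combination Yop j (Yop j f) x * I_sq

theorem Lop_eq (hV : IsOpen V) (hf : ContDiffOn ℝ 2 f V) (hx : x ∈ V) (c : ℝ) :
    Lop c f x = -sumDerivDeriv zField zbarField f x + (c - n * I) * tField.deriv f x := by
  have hswap := sumDerivDeriv_swap (fun j k => bracketEq_zbarField_zField j k)
    (hf.contDiffAt (hV.mem_nhds hx))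
  simp only [sumDerivDeriv_apply, ← Zop_eq_deriv, ← Zbar_eq_deriv, ← Tvf_eq_deriv,
    Fintype.card_fin] at hswap ⊢
  rw [Lop, Finset.sum_congr rfl fun j _ => Xop_Xop_add_Yop_Yop hV hf hx j, ← Finset.mul_sum,
    Finset.sum_add_distrib, hswap]
  ring

theorem half_sum_Zbar_Zbar_Zop_Zop_add_Zop_Zop_Zbar_Zbar (hV : IsOpen V)
    (hu : ContDiffOn ℝ 4 u V) (hx : x ∈ V) :
    (1 / 2 : ℂ) * ∑ j : Fin n, ∑ k : Fin n,
        (Zbar j (Zbar k (Zop j (Zop k u))) x + Zop j (Zop k (Zbar j (Zbar k u))) x)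
      = sumDerivDeriv zField zbarField (sumDerivDeriv zField zbarField u) x
        + 2 * n * I * sumDerivDeriv zField zbarField (tField.deriv u) x
        - 2 * n * (n + 1) * tField.deriv (tField.deriv u) x := by
  set P := sumDerivDeriv (zField (n := n)) zbarField
  set Pbar := sumDerivDeriv (zbarField (n := n)) zField
  set T := (tField (n := n)).deriv
  have hE : ∑ j : Fin n, ∑ k : Fin n, Zbar j (Zbar k (Zop j (Zop k u))) x
      = Pbar (Pbar u) x + 2 * I * T (Pbar u) x := by
    simp only [Zop_eq_deriv, Zbar_eq_deriv]
    exact sum_sum_deriv_deriv_deriv_deriv hV hx bracketEq_zbarField_zField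
      (fun _ => bracketEq_tField _ _) hu
  have hF : ∑ j : Fin n, ∑ k : Fin n, Zop j (Zop k (Zbar j (Zbar k u))) x
      = P (P u) x + -2 * I * T (P u) x := by
    simp only [Zop_eq_deriv, Zbar_eq_deriv]
    exact sum_sum_deriv_deriv_deriv_deriv hV hx bracketEq_zField_zbarField
      (fun _ => bracketEq_tField _ _) hu
  have hswap {f : Heis n → ℂ} {y : Heis n} (hf : ContDiffAt ℝ 2 f y) :
      Pbar f y = P f y + (n * (2 * I)) * T f y := by
    simpa using sumDerivDeriv_swap bracketEq_zbarField_zField hf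
  have hPbar : EqOn (Pbar u) ((1 : ℂ) • P u + (n * (2 * I)) • T u) V := fun y hy => by
    simpa using hswap ((hu.of_le (by norm_num)).contDiffAt (hV.mem_nhds hy))
  have hTu : ContDiffOn ℝ 3 (T u) V := tField.contDiffOn_deriv hV (m := 3) hu
  have hPbar_Pbar : Pbar (Pbar u) x = P (Pbar u) x + (n * (2 * I)) * T (Pbar u) x :=
    hswap ((contDiffOn_sumDerivDeriv _ _ hV (m := 2) hu).contDiffAt (hV.mem_nhds hx))
  have hP_Pbar : P (Pbar u) x = 1 * P (P u) x + (n * (2 * I)) * P (T u) x :=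
    sumDerivDeriv_eq_of_eqOn _ _ hV hx _ _ hPbar (contDiffOn_sumDerivDeriv _ _ hV (m := 2) hu)
      (hTu.of_le (by norm_num))
  have hT_Pbar : T (Pbar u) x = 1 * T (P u) x + (n * (2 * I)) * T (T u) x :=
    tField.deriv_eq_of_eqOn hV hx _ _ hPbar
      ((contDiffOn_sumDerivDeriv _ _ hV (m := 2) hu).differentiableAt_of_isOpen hV (by norm_num) hx)
      (hTu.differentiableAt_of_isOpen hV (by norm_num) hx)
  have hT_P : T (P u) x = P (T u) x :=
    deriv_sumDerivDeriv_comm hV hx (fun _ => bracketEq_tField _ _) (fun _ => bracketEq_tField _ _)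
      (hu.of_le (by norm_num))
  rw [Finset.sum_congr rfl fun j _ => Finset.sum_add_distrib, Finset.sum_add_distrib, hE, hF,
    hPbar_Pbar, hP_Pbar, hT_Pbar, hT_P]
  linear_combination (2 * n * (n + 1 : ℂ) * T (T u) x) * I_sq

theorem Lop_neg_Lop (hV : IsOpen V) (hu : ContDiffOn ℝ 4 u V) (hx : x ∈ V) (c : ℝ) :
    Lop (-c) (Lop c u) x
      = sumDerivDeriv zField zbarField (sumDerivDeriv zField zbarField u) x
        + 2 * n * I * sumDerivDeriv zField zbarField (tField.deriv u) x
        - (c ^ 2 + n ^ 2) * tField.deriv (tField.deriv u) x := by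
  set P := sumDerivDeriv (zField (n := n)) zbarField
  set T := (tField (n := n)).deriv
  have hPu : ContDiffOn ℝ 2 (P u) V := contDiffOn_sumDerivDeriv _ _ hV (m := 2) hu
  have hTu : ContDiffOn ℝ 3 (T u) V := tField.contDiffOn_deriv hV (m := 3) hu
  have hLc : EqOn (Lop c u) ((-1 : ℂ) • P u + (c - n * I) • T u) V := fun y hy => by
    simpa [neg_add_eq_sub] using Lop_eq hV (hu.of_le (by norm_num)) hy c
  have hLc_contDiff : ContDiffOn ℝ 2 (Lop c u) V :=
    ((contDiffOn_const.smul hPu).add (contDiffOn_const.smul (hTu.of_le (by norm_num)))).congr hLc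
  have hL_L : Lop (-c) (Lop c u) x = -P (Lop c u) x + ((-c : ℝ) - n * I) * T (Lop c u) x :=
    Lop_eq hV hLc_contDiff hx (-c)
  have hP_L : P (Lop c u) x = -1 * P (P u) x + (c - n * I) * P (T u) x :=
    sumDerivDeriv_eq_of_eqOn _ _ hV hx _ _ hLc hPu (hTu.of_le (by norm_num))
  have hT_L : T (Lop c u) x = -1 * T (P u) x + (c - n * I) * T (T u) x :=
    tField.deriv_eq_of_eqOn hV hx _ _ hLc (hPu.differentiableAt_of_isOpen hV (by norm_num) hx)
      (hTu.differentiableAt_of_isOpen hV (by norm_num) hx)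
  have hT_P : T (P u) x = P (T u) x :=
    deriv_sumDerivDeriv_comm hV hx (fun _ => bracketEq_tField _ _) (fun _ => bracketEq_tField _ _)
      (hu.of_le (by norm_num))
  rw [hL_L, hP_L, hT_L, hT_P]
  push_cast
  linear_combination ((n : ℂ) ^ 2 * T (T u) x) * I_sq

end Heisenberg

/-- For every `C⁴` complex-valued function `u` on an open subset of `ℝ^{2n+1}`,
`½ Σ_{j,k} ( Z̄_jZ̄_k(Z_jZ_k u) + Z_jZ_k(Z̄_jZ̄_k u) ) = L_{-√(n(n+2))}(L_{√(n(n+2))} u)`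
pointwise. -/
theorem ZZbar_identity {n : ℕ} (V : Set (Heis n)) (hV : IsOpen V)
    (u : Heis n → ℂ) (hu : ContDiffOn ℝ 4 u V) :
    ∀ p ∈ V,
      (1/2 : ℂ) * ∑ j : Fin n, ∑ k : Fin n,
          (Zbar j (Zbar k (Zop j (Zop k u))) p + Zop j (Zop k (Zbar j (Zbar k u))) p)
        = Lop (-Real.sqrt (n * (n+2))) (Lop (Real.sqrt (n * (n+2))) u) p := by
  intro p hp
  have hc : ((Real.sqrt (n * (n + 2)) : ℝ) : ℂ) ^ 2 = n * (n + 2) := by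
    rw [← Complex.ofReal_pow, Real.sq_sqrt (by positivity)]
    push_cast
    ring
  rw [Heisenberg.half_sum_Zbar_Zbar_Zop_Zop_add_Zop_Zop_Zbar_Zbar hV hu hp,
    Heisenberg.Lop_neg_Lop hV hu hp, hc]
  ring
end

section
/- Let F : U → U' be a C² conformal diffeomorphism between open connected subsets of ℍⁿ, G = F⁻¹ = (g_1,…,g_{2n+1}), and let W̃ be one of the right-invariant vector fields X̃_1,…,X̃_n, Ỹ_1,…,Ỹ_n, T. Suppose ψ : U → ℝ is a C² function satisfying (W̃ g_ℓ) ∘ F = X_{n+ℓ}ψ and (W̃ g_{n+ℓ}) ∘ F = −X_ℓψ on U for every ℓ = 1,…,n. Then Z_kZ_ℓψ = 0 on U for all 1 ≤ k,ℓ ≤ n. -/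
open Set Matrix MeasureTheory

/-!
Differentiating the contact equation `F^*α = λ α` shows that `F` multiplies the symplectic form
`ω = dα / 4` on horizontal vectors by `λ`, i.e. `(D₀F)ᵀ J D₀F = λ J` for the standard complex
structure `J` of `ℝ^{2n}`. Together with `(D₀F)ᵀ D₀F = μ I` this forces `μ = λ` and
`J D₀F = D₀F J`: the horizontal differential is complex linear, and so is
`D₀G ∘ F = (D₀F)⁻¹`. For `G` this says that `Z_j (g_{n+ℓ} + i g_ℓ) = 0` for all `j`. The
right-invariant field `W̃` commutes with the left-invariant `X_j, Y_j`, so also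
`Z_j (W̃ g_{n+ℓ} + i W̃ g_ℓ) = 0`, and this survives composition with `F` because `D₀F` is complex
linear. The hypothesis says `Z_ℓ ψ = -½ (W̃ g_{n+ℓ} + i W̃ g_ℓ) ∘ F`, hence `Z_k Z_ℓ ψ = 0`.
-/

open Filter Topology

noncomputable section

variable {n : ℕ}

def xyEquiv (n : ℕ) : Fin n ⊕ Fin n ≃ Fin (2 * n) :=
  finSumFinEquiv.trans (finCongr (two_mul n).symm)

abbrev xH (j : Fin n) : Fin (2 * n) := xyEquiv n (Sum.inl j)

abbrev yH (j : Fin n) : Fin (2 * n) := xyEquiv n (Sum.inr j)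

lemma val_yH (j : Fin n) : (yH j : ℕ) = n + j := rfl

@[simp] lemma hIdx_xH (j : Fin n) : hIdx (xH j) = xIdx j := rfl

@[simp] lemma hIdx_yH (j : Fin n) : hIdx (yH j) = yIdx j := rfl

lemma sum_eq_sum_xH_add_sum_yH {M : Type*} [AddCommMonoid M] (f : Fin (2 * n) → M) :
    ∑ m, f m = ∑ j, f (xH j) + ∑ j, f (yH j) := by
  rw [← (xyEquiv n).sum_comp, Fintype.sum_sum_type]

@[simp] lemma xIdx_ne_tIdx (j : Fin n) : xIdx j ≠ tIdx := by
  simp only [xIdx, tIdx, ne_eq, Fin.ext_iff]; omega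

@[simp] lemma yIdx_ne_tIdx (j : Fin n) : yIdx j ≠ tIdx := by
  simp only [yIdx, tIdx, ne_eq, Fin.ext_iff]; omega

@[simp] lemma hIdx_ne_tIdx (m : Fin (2 * n)) : hIdx m ≠ tIdx := by
  simp only [hIdx, tIdx, ne_eq, Fin.ext_iff]; omega

@[simp] lemma xIdx_ne_yIdx (j k : Fin n) : xIdx j ≠ yIdx k := by
  simp only [xIdx, yIdx, ne_eq, Fin.ext_iff]; omega

@[simp] lemma xIdx_inj {j k : Fin n} : xIdx j = xIdx k ↔ j = k := by
  simp [xIdx, Fin.ext_iff]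

@[simp] lemma yIdx_inj {j k : Fin n} : yIdx j = yIdx k ↔ j = k := by
  simp [yIdx, Fin.ext_iff]

@[simp] lemma hIdx_inj {m m' : Fin (2 * n)} : hIdx m = hIdx m' ↔ m = m' := by
  simp [hIdx, Fin.ext_iff]

section XYop

variable {E : Type*} [NormedAddCommGroup E] [NormedSpace ℝ E]

lemma XYop_xH (j : Fin n) : XYop (xH j) = (Xop j : (Heis n → E) → Heis n → E) := by
  funext u p; exact dif_pos j.2

lemma XYop_yH (j : Fin n) : XYop (yH j) = (Yop j : (Heis n → E) → Heis n → E) := by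
  funext u p
  rw [XYop, dif_neg (by simp [val_yH])]
  congr
  simp [val_yH]

end XYop

def coordCLM (i : Fin (2 * n + 1)) : Heis n →L[ℝ] ℝ := ContinuousLinearMap.proj i

@[simp] lemma coordCLM_apply (i : Fin (2 * n + 1)) (v : Heis n) : coordCLM i v = v i := rfl

/-- `dα = 4 ω`. -/
def symplecticForm : Heis n →L[ℝ] Heis n →L[ℝ] ℝ :=
  ∑ j : Fin n, ((coordCLM (xIdx j)).smulRight (coordCLM (yIdx j))
    - (coordCLM (yIdx j)).smulRight (coordCLM (xIdx j)))

lemma symplecticForm_apply (v w : Heis n) :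
    symplecticForm v w = ∑ j, (v (xIdx j) * w (yIdx j) - v (yIdx j) * w (xIdx j)) := by
  simp [symplecticForm]

lemma symplecticForm_swap (v w : Heis n) : symplecticForm w v = -symplecticForm v w := by
  simp only [symplecticForm_apply, ← Finset.sum_neg_distrib]
  exact Finset.sum_congr rfl fun _ _ => by ring

lemma symplecticForm_single_xIdx (p : Heis n) (j : Fin n) :
    symplecticForm p (Pi.single (xIdx j) 1) = -p (yIdx j) := by
  simp [symplecticForm_apply, Pi.single_apply]

lemma symplecticForm_single_yIdx (p : Heis n) (j : Fin n) :
    symplecticForm p (Pi.single (yIdx j) 1) = p (xIdx j) := by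
  simp [symplecticForm_apply, Pi.single_apply]

@[simp] lemma symplecticForm_single_tIdx_left (c : ℝ) (w : Heis n) :
    symplecticForm (Pi.single tIdx c) w = 0 := by
  simp [symplecticForm_apply]

@[simp] lemma symplecticForm_single_tIdx_right (v : Heis n) (c : ℝ) :
    symplecticForm v (Pi.single tIdx c) = 0 := by
  simp [symplecticForm_apply]

lemma alphaForm_eq (p v : Heis n) : alphaForm p v = v tIdx + 2 * symplecticForm p v := by
  rw [alphaForm, symplecticForm_apply]

lemma alphaForm_single_tIdx (p : Heis n) : alphaForm p (Pi.single tIdx 1) = 1 := by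
  simp [alphaForm_eq]

def Jmat (n : ℕ) : Matrix (Fin (2 * n)) (Fin (2 * n)) ℝ :=
  (Matrix.fromBlocks 0 1 (-1) 0).submatrix (xyEquiv n).symm (xyEquiv n).symm

lemma Jmat_transpose_mul_self : (Jmat n)ᵀ * Jmat n = 1 := by
  simp [Jmat, Matrix.transpose_submatrix, Matrix.submatrix_mul_equiv, Matrix.fromBlocks_transpose,
    Matrix.fromBlocks_multiply]

lemma transpose_Jmat : (Jmat n)ᵀ = -Jmat n := by
  have h : (Matrix.fromBlocks 0 1 (-1) 0 : Matrix (Fin n ⊕ Fin n) (Fin n ⊕ Fin n) ℝ)ᵀ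
      = -Matrix.fromBlocks 0 1 (-1) 0 := by
    rw [Matrix.fromBlocks_transpose, Matrix.fromBlocks_neg]; simp
  rw [Jmat, Matrix.transpose_submatrix, h]
  rfl

lemma Jmat_mulVec_xH (v : Fin (2 * n) → ℝ) (j : Fin n) : (Jmat n *ᵥ v) (xH j) = v (yH j) := by
  simp [Jmat, Matrix.mulVec, dotProduct, sum_eq_sum_xH_add_sum_yH, Matrix.one_apply]

lemma Jmat_mulVec_yH (v : Fin (2 * n) → ℝ) (j : Fin n) : (Jmat n *ᵥ v) (yH j) = -v (xH j) := by
  simp [Jmat, Matrix.mulVec, dotProduct, sum_eq_sum_xH_add_sum_yH, Matrix.one_apply]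

lemma vecMul_Jmat (v : Fin (2 * n) → ℝ) : v ᵥ* Jmat n = -(Jmat n *ᵥ v) := by
  rw [← Matrix.vecMul_transpose, transpose_Jmat, Matrix.vecMul_neg, neg_neg]

lemma Jmat_mulVec_vecMul {M : Matrix (Fin (2 * n)) (Fin (2 * n)) ℝ} (hM : Commute (Jmat n) M)
    (v : Fin (2 * n) → ℝ) : (Jmat n *ᵥ v) ᵥ* M = Jmat n *ᵥ (v ᵥ* M) := by
  rw [← neg_neg (Jmat n *ᵥ v), ← neg_neg (Jmat n *ᵥ (v ᵥ* M)), ← vecMul_Jmat, ← vecMul_Jmat,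
    Matrix.neg_vecMul, Matrix.vecMul_vecMul, Matrix.vecMul_vecMul, hM.eq]

def hcoords (v : Heis n) : Fin (2 * n) → ℝ := fun m => v (hIdx m)

lemma hcoords_single_hIdx (m : Fin (2 * n)) :
    hcoords (Pi.single (hIdx m) 1 : Heis n) = Pi.single m 1 := by
  ext m'; simp [hcoords, Pi.single_apply]

lemma symplecticForm_eq_dotProduct (v w : Heis n) :
    symplecticForm v w = hcoords v ⬝ᵥ (Jmat n *ᵥ hcoords w) := by
  simp [symplecticForm_apply, dotProduct, sum_eq_sum_xH_add_sum_yH, Jmat_mulVec_xH,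
    Jmat_mulVec_yH, hcoords, sub_eq_add_neg, Finset.sum_add_distrib]

/-- `leftField p w` is the value at `p` of the left-invariant vector field that equals `w` at the
origin, `d/ds (p * s w)` at `s = 0`; `rightField p w = d/ds (s w * p)` is its right-invariant
counterpart. -/
def leftField (p : Heis n) : Heis n →L[ℝ] Heis n :=
  ContinuousLinearMap.id ℝ (Heis n) - ((2 : ℝ) • symplecticForm p).smulRight (Pi.single tIdx 1)

def rightField (p : Heis n) : Heis n →L[ℝ] Heis n :=
  ContinuousLinearMap.id ℝ (Heis n) + ((2 : ℝ) • symplecticForm p).smulRight (Pi.single tIdx 1)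

lemma leftField_apply (p w : Heis n) :
    leftField p w = w - (2 * symplecticForm p w) • Pi.single tIdx 1 := by
  simp [leftField]

lemma rightField_apply (p w : Heis n) :
    rightField p w = w + (2 * symplecticForm p w) • Pi.single tIdx 1 := by
  simp [rightField]

@[simp] lemma symplecticForm_leftField (p v w : Heis n) :
    symplecticForm (leftField p v) w = symplecticForm v w := by
  simp [leftField_apply]

@[simp] lemma symplecticForm_rightField (p v w : Heis n) :
    symplecticForm (rightField p v) w = symplecticForm v w := by
  simp [rightField_apply]

@[simp] lemma alphaForm_leftField (p v : Heis n) : alphaForm p (leftField p v) = v tIdx := by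
  simp [alphaForm_eq, leftField_apply]

lemma hcoords_leftField (p w : Heis n) : hcoords (leftField p w) = hcoords w := by
  ext m; simp [hcoords, leftField_apply]

lemma hasFDerivAt_leftField (v p : Heis n) :
    HasFDerivAt (fun q => leftField q v)
      (-((2 : ℝ) • symplecticForm.flip v).smulRight (Pi.single tIdx 1)) p := by
  have h : (fun q => leftField q v)
      = fun q => v - (((2 : ℝ) • symplecticForm.flip v).smulRight (Pi.single tIdx 1)) q := by
    funext q; simp [leftField_apply]
  rw [h, ← zero_sub]
  exact (hasFDerivAt_const v p).sub (ContinuousLinearMap.hasFDerivAt _)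

lemma hasFDerivAt_rightField (v p : Heis n) :
    HasFDerivAt (fun q => rightField q v)
      (((2 : ℝ) • symplecticForm.flip v).smulRight (Pi.single tIdx 1)) p := by
  have h : (fun q => rightField q v)
      = fun q => v + (((2 : ℝ) • symplecticForm.flip v).smulRight (Pi.single tIdx 1)) q := by
    funext q; simp [rightField_apply]
  rw [h]
  simpa using (hasFDerivAt_const v p).add (ContinuousLinearMap.hasFDerivAt
    (((2 : ℝ) • symplecticForm.flip v).smulRight (Pi.single tIdx 1)))

lemma lieBracket_leftField_rightField (v w p : Heis n) :
    VectorField.lieBracket ℝ (fun q => leftField q v) (fun q => rightField q w) p = 0 := by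
  rw [VectorField.lieBracket, (hasFDerivAt_leftField v p).fderiv,
    (hasFDerivAt_rightField w p).fderiv]
  simp [symplecticForm_swap w v]

section DerivAlong

variable {E F : Type*} [NormedAddCommGroup E] [NormedSpace ℝ E] [NormedAddCommGroup F]
  [NormedSpace ℝ F] {V W : E → E} {x : E}

def derivAlong (V : E → E) (u : E → F) (x : E) : F := fderiv ℝ u x (V x)

lemma derivAlong_congr {u v : E → F} (h : u =ᶠ[𝓝 x] v) : derivAlong V u x = derivAlong V v x := by
  rw [derivAlong, derivAlong, h.fderiv_eq]

lemma derivAlong_neg (u : E → F) : derivAlong V (fun y => -u y) x = -derivAlong V u x := by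
  simp [derivAlong, fderiv_fun_neg]

lemma derivAlong_add {u v : E → F} (hu : DifferentiableAt ℝ u x) (hv : DifferentiableAt ℝ v x) :
    derivAlong V (fun y => u y + v y) x = derivAlong V u x + derivAlong V v x := by
  simp [derivAlong, fderiv_fun_add hu hv]

lemma derivAlong_const_mul (c : ℂ) (u : E → ℂ) :
    derivAlong V (fun y => c * u y) x = c * derivAlong V u x := by
  simp only [derivAlong, ← smul_eq_mul]
  rw [show (fun y => c • u y) = c • u from rfl, fderiv_const_smul_field]
  rfl

lemma derivAlong_ofReal {u : E → ℝ} (hu : DifferentiableAt ℝ u x) :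
    derivAlong V (fun y => (u y : ℂ)) x = derivAlong V u x := by
  change fderiv ℝ (Complex.ofRealCLM ∘ u) x (V x) = _
  rw [(Complex.ofRealCLM.hasFDerivAt.comp x hu.hasFDerivAt).fderiv]
  rfl

lemma ContDiffAt.differentiableAt_derivAlong {u : E → F} (hu : ContDiffAt ℝ 2 u x)
    (hV : DifferentiableAt ℝ V x) : DifferentiableAt ℝ (derivAlong V u) x :=
  ((hu.fderiv_right (m := 1) (by norm_num)).differentiableAt one_ne_zero).clm_apply hV

lemma derivAlong_comm {u : E → F} (hu : ContDiffAt ℝ 2 u x) (hV : DifferentiableAt ℝ V x)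
    (hW : DifferentiableAt ℝ W x) (hVW : VectorField.lieBracket ℝ V W x = 0) :
    derivAlong V (derivAlong W u) x = derivAlong W (derivAlong V u) x := by
  have h := VectorField.fderiv_apply_lieBracket hu (by simp) hW hV
  rw [hVW, map_zero, eq_comm, sub_eq_zero] at h
  exact h

end DerivAlong

section InvariantFields

variable {E : Type*} [NormedAddCommGroup E] [NormedSpace ℝ E]

lemma Xop_eq_derivAlong (j : Fin n) (u : Heis n → E) :
    Xop j u = derivAlong (fun p => leftField p (Pi.single (xIdx j) 1)) u := by
  funext p
  simp [derivAlong, Xop, pd, leftField_apply, symplecticForm_single_xIdx]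

lemma Yop_eq_derivAlong (j : Fin n) (u : Heis n → E) :
    Yop j u = derivAlong (fun p => leftField p (Pi.single (yIdx j) 1)) u := by
  funext p
  simp [derivAlong, Yop, pd, leftField_apply, symplecticForm_single_yIdx]

lemma XYop_eq_derivAlong (m : Fin (2 * n)) (u : Heis n → E) :
    XYop m u = derivAlong (fun p => leftField p (Pi.single (hIdx m) 1)) u := by
  obtain ⟨j | j, rfl⟩ := (xyEquiv n).surjective m
  · rw [XYop_xH, Xop_eq_derivAlong]; rfl
  · rw [XYop_yH, Yop_eq_derivAlong]; rfl

lemma exists_rightField {Wt : (Heis n → ℝ) → Heis n → ℝ}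
    (hWt : Wt = Tvf ∨ (∃ j : Fin n, Wt = Xtilde j) ∨ (∃ j : Fin n, Wt = Ytilde j)) :
    ∃ w : Heis n, ∀ u, Wt u = derivAlong (fun p => rightField p w) u := by
  rcases hWt with rfl | ⟨j, rfl⟩ | ⟨j, rfl⟩
  · refine ⟨Pi.single tIdx 1, fun u => funext fun p => ?_⟩
    simp [derivAlong, Tvf, pd, rightField_apply]
  · refine ⟨Pi.single (xIdx j) 1, fun u => funext fun p => ?_⟩
    simp only [derivAlong, Xtilde, Xop, Tvf, pd, rightField_apply, symplecticForm_single_xIdx,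
      map_add, map_smul, smul_eq_mul]
    ring
  · refine ⟨Pi.single (yIdx j) 1, fun u => funext fun p => ?_⟩
    simp only [derivAlong, Ytilde, Yop, Tvf, pd, rightField_apply, symplecticForm_single_yIdx,
      map_add, map_smul, smul_eq_mul]
    ring

lemma derivAlong_leftField_comm_rightField {u : Heis n → ℝ} {q : Heis n}
    (hu : ContDiffAt ℝ 2 u q) (v w : Heis n) :
    derivAlong (fun p => leftField p v) (derivAlong (fun p => rightField p w) u) q
      = derivAlong (fun p => rightField p w) (derivAlong (fun p => leftField p v) u) q :=
  derivAlong_comm hu (hasFDerivAt_leftField v q).differentiableAt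
    (hasFDerivAt_rightField w q).differentiableAt (lieBracket_leftField_rightField v w q)

end InvariantFields

section ChainRule

lemma sum_hIdx_single (w : Heis n) :
    ∑ m, w (hIdx m) • (Pi.single (hIdx m) 1 : Heis n) = w - w tIdx • Pi.single tIdx 1 := by
  rw [eq_sub_iff_add_eq]
  exact ((Fin.sum_univ_castSucc (fun i => w i • (Pi.single i 1 : Heis n))).symm.trans
    (pi_eq_sum_univ' w).symm)

lemma eq_sum_leftField_of_alphaForm_eq_zero {q w : Heis n} (hw : alphaForm q w = 0) :
    w = ∑ m, w (hIdx m) • leftField q (Pi.single (hIdx m) 1) := by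
  rw [alphaForm_eq] at hw
  calc w = leftField q (w - w tIdx • Pi.single tIdx 1) := by
        rw [leftField_apply, map_sub, map_smul, symplecticForm_single_tIdx_right, smul_zero,
          sub_zero, sub_sub, ← add_smul, hw, zero_smul, sub_zero]
    _ = _ := by rw [← sum_hIdx_single, map_sum]; simp only [map_smul]

lemma fderiv_apply_eq_sum_XYop {E : Type*} [NormedAddCommGroup E] [NormedSpace ℝ E]
    (u : Heis n → E) {q w : Heis n} (hw : alphaForm q w = 0) :
    fderiv ℝ u q w = ∑ m, w (hIdx m) • XYop m u q := by
  conv_lhs => rw [eq_sum_leftField_of_alphaForm_eq_zero hw]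
  simp [XYop_eq_derivAlong, derivAlong]

variable {F : Heis n → Heis n} {p : Heis n}

lemma D0_apply (hF : DifferentiableAt ℝ F p) (m ℓ : Fin (2 * n)) :
    D0 F p m ℓ = fderiv ℝ F p (leftField p (Pi.single (hIdx ℓ) 1)) (hIdx m) := by
  simp [D0, XYop_eq_derivAlong, derivAlong, fderiv_apply hF]

def hgrad (u : Heis n → ℝ) (q : Heis n) : Fin (2 * n) → ℝ := fun m => XYop m u q

lemma hgrad_comp {u : Heis n → ℝ} (hF : DifferentiableAt ℝ F p)
    (hFα : ∀ v, alphaForm p v = 0 → alphaForm (F p) (fderiv ℝ F p v) = 0)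
    (hu : DifferentiableAt ℝ u (F p)) :
    hgrad (fun r => u (F r)) p = hgrad u (F p) ᵥ* D0 F p := by
  ext ℓ
  rw [hgrad, XYop_eq_derivAlong]
  have hhor := hFα (leftField p (Pi.single (hIdx ℓ) 1)) (by simp)
  change fderiv ℝ (u ∘ F) p _ = _
  rw [fderiv_comp p hu hF, ContinuousLinearMap.comp_apply, fderiv_apply_eq_sum_XYop u hhor]
  simp [Matrix.vecMul, dotProduct, hgrad, D0_apply hF, mul_comm]

lemma hgrad_coord (a : Fin (2 * n)) (p : Heis n) :
    hgrad (fun r => r (hIdx a)) p = (1 : Matrix (Fin (2 * n)) (Fin (2 * n)) ℝ) a := by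
  ext ℓ
  have h : fderiv ℝ (fun r : Heis n => r (hIdx a)) p = coordCLM (hIdx a) := (coordCLM _).fderiv
  simp [hgrad, XYop_eq_derivAlong, derivAlong, h, leftField_apply, Pi.single_apply,
    Matrix.one_apply]

lemma D0_mul_D0_eq_one {G : Heis n → Heis n} (hF : DifferentiableAt ℝ F p)
    (hFα : ∀ v, alphaForm p v = 0 → alphaForm (F p) (fderiv ℝ F p v) = 0)
    (hG : DifferentiableAt ℝ G (F p)) (hGF : ∀ᶠ r in 𝓝 p, G (F r) = r) :
    D0 G (F p) * D0 F p = 1 := by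
  ext a ℓ
  have hcomp := hgrad_comp hF hFα (differentiableAt_pi.1 hG (hIdx a))
  have hcongr : hgrad (fun r => G (F r) (hIdx a)) p = hgrad (fun r => r (hIdx a)) p := by
    ext m
    simp only [hgrad, XYop_eq_derivAlong]
    exact derivAlong_congr (hGF.mono fun r hr => by simp only [hr])
  rw [hcongr, hgrad_coord] at hcomp
  calc (D0 G (F p) * D0 F p) a ℓ = (hgrad (fun q => G q (hIdx a)) (F p) ᵥ* D0 F p) ℓ := rfl
    _ = (1 : Matrix (Fin (2 * n)) (Fin (2 * n)) ℝ) a ℓ := by rw [← hcomp]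

end ChainRule

section Symplectic

lemma hasFDerivAt_alphaForm {f g : Heis n → Heis n} {f' g' : Heis n →L[ℝ] Heis n} {p : Heis n}
    (hf : HasFDerivAt f f' p) (hg : HasFDerivAt g g' p) :
    HasFDerivAt (fun r => alphaForm (f r) (g r))
      ((coordCLM tIdx).comp g' + (2 : ℝ) • (symplecticForm.precompR (Heis n) (f p) g'
        + symplecticForm.precompL (Heis n) f' (g p))) p := by
  have h : (fun r => alphaForm (f r) (g r))
      = fun r => coordCLM tIdx (g r) + 2 * symplecticForm (f r) (g r) := by
    funext r; rw [alphaForm_eq]; rfl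
  rw [h]
  exact ((coordCLM tIdx).hasFDerivAt.comp p hg).add
    ((symplecticForm.hasFDerivAt_of_bilinear hf hg).const_mul 2)

variable {F : Heis n → Heis n} {lam : Heis n → ℝ} {p : Heis n}

lemma alphaForm_fderiv_fderiv_add (hF : ContDiffAt ℝ 2 F p)
    (hct : ∀ᶠ r in 𝓝 p, ∀ v, alphaForm (F r) (fderiv ℝ F r v) = lam r * alphaForm r v)
    {ζ : Heis n} (hζ : alphaForm p ζ = 0) (θ : Heis n) :
    alphaForm (F p) (fderiv ℝ (fderiv ℝ F) p θ ζ)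
        + 2 * symplecticForm (fderiv ℝ F p θ) (fderiv ℝ F p ζ)
      = lam p * (2 * symplecticForm θ ζ) := by
  have hF₁ : DifferentiableAt ℝ F p := hF.differentiableAt two_ne_zero
  have hF₂ : DifferentiableAt ℝ (fderiv ℝ F) p :=
    (hF.fderiv_right (m := 1) (by norm_num)).differentiableAt one_ne_zero
  have hDF : ∀ v, HasFDerivAt (fun r => fderiv ℝ F r v)
      ((fderiv ℝ (fderiv ℝ F) p).flip v) p := fun v => by
    simpa using hF₂.hasFDerivAt.clm_apply (hasFDerivAt_const v p)
  -- writing `lam r = α_{F r}(dF_r T)` makes the contact factor differentiable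
  have hzero : (fun r => alphaForm (F r) (fderiv ℝ F r ζ)
      - alphaForm (F r) (fderiv ℝ F r (Pi.single tIdx 1)) * alphaForm r ζ) =ᶠ[𝓝 p] fun _ => 0 :=
    hct.mono fun r hr => by simp only [hr, alphaForm_single_tIdx]; ring
  have hderiv := ((hasFDerivAt_alphaForm hF₁.hasFDerivAt (hDF ζ)).fun_sub
    ((hasFDerivAt_alphaForm hF₁.hasFDerivAt (hDF (Pi.single tIdx 1))).fun_mul
      (hasFDerivAt_alphaForm (f := fun r => r) (hasFDerivAt_id p)
        (hasFDerivAt_const ζ p)))).fderiv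
  rw [hzero.fderiv_eq, fderiv_fun_const] at hderiv
  have h := congrArg (· θ) hderiv
  simp only [Pi.zero_apply, _root_.zero_apply, ContinuousLinearMap.precompR_apply,
    ContinuousLinearMap.compL_apply, smul_add, hct.self_of_nhds, alphaForm_single_tIdx, mul_one,
    ContinuousLinearMap.comp_zero, zero_add, hζ, zero_smul, add_zero, _root_.sub_apply,
    _root_.add_apply, ContinuousLinearMap.comp_apply, ContinuousLinearMap.flip_apply,
    coordCLM_apply, _root_.smul_apply, smul_eq_mul, ContinuousLinearMap.precompL_apply,
    ContinuousLinearMap.id_apply] at h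
  rw [alphaForm_eq]
  linarith

lemma symplecticForm_fderiv_of_contact (hF : ContDiffAt ℝ 2 F p)
    (hct : ∀ᶠ r in 𝓝 p, ∀ v, alphaForm (F r) (fderiv ℝ F r v) = lam r * alphaForm r v)
    {v w : Heis n} (hv : alphaForm p v = 0) (hw : alphaForm p w = 0) :
    symplecticForm (fderiv ℝ F p v) (fderiv ℝ F p w) = lam p * symplecticForm v w := by
  have hvw := alphaForm_fderiv_fderiv_add hF hct hw v
  have hwv := alphaForm_fderiv_fderiv_add hF hct hv w
  rw [hF.isSymmSndFDerivAt (by simp) w v, symplecticForm_swap (fderiv ℝ F p v),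
    symplecticForm_swap v] at hwv
  linear_combination (hvw - hwv) / 4

lemma transpose_D0_mul_Jmat_mul_D0 (hF : ContDiffAt ℝ 2 F p)
    (hct : ∀ᶠ r in 𝓝 p, ∀ v, alphaForm (F r) (fderiv ℝ F r v) = lam r * alphaForm r v) :
    (D0 F p)ᵀ * Jmat n * D0 F p = lam p • Jmat n := by
  ext a b
  have hcol : ∀ c, (D0 F p)ᵀ c = hcoords (fderiv ℝ F p (leftField p (Pi.single (hIdx c) 1))) :=
    fun c => funext fun m => D0_apply (hF.differentiableAt two_ne_zero) m c
  have hα : ∀ c, alphaForm p (leftField p (Pi.single (hIdx c) 1)) = 0 := fun c => by simp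
  rw [Matrix.mul_mul_apply, hcol, hcol, ← symplecticForm_eq_dotProduct,
    symplecticForm_fderiv_of_contact hF hct (hα a) (hα b), symplecticForm_eq_dotProduct]
  simp [hcoords_leftField, hcoords_single_hIdx]

end Symplectic

section LinearAlgebra

variable {ι : Type*} [Fintype ι] [DecidableEq ι]

lemma Matrix.commute_of_conformal_of_symplectic {J M : Matrix ι ι ℝ}
    (hJ : Jᵀ * J = 1) {μ c : ℝ} (hμ : 0 < μ) (hc : 0 < c) (hM : Mᵀ * M = μ • 1)
    (hMJ : Mᵀ * J * M = c • J) : Commute J M := by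
  cases isEmpty_or_nonempty ι
  · exact Subsingleton.elim _ _
  have hMMt : M * Mᵀ = μ • 1 := by
    have h : (μ⁻¹ • Mᵀ) * M = 1 := by
      rw [Matrix.smul_mul, hM, smul_smul, inv_mul_cancel₀ hμ.ne', one_smul]
    rw [mul_eq_one_comm, Matrix.mul_smul] at h
    rw [← one_smul ℝ (M * Mᵀ), ← mul_inv_cancel₀ hμ.ne', mul_smul, h]
  have key : μ • (J * M) = c • (M * J) :=
    calc μ • (J * M) = M * (Mᵀ * J * M) := by
          rw [← Matrix.mul_assoc, ← Matrix.mul_assoc, hMMt, Matrix.smul_mul, Matrix.one_mul,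
            Matrix.smul_mul]
      _ = c • (M * J) := by rw [hMJ, Matrix.mul_smul]
  have hJM : (J * M)ᵀ * (J * M) = μ • 1 := by
    rw [Matrix.transpose_mul, Matrix.mul_assoc, ← Matrix.mul_assoc Jᵀ, hJ, Matrix.one_mul, hM]
  have hMJ' : (M * J)ᵀ * (M * J) = μ • 1 := by
    rw [Matrix.transpose_mul, Matrix.mul_assoc, ← Matrix.mul_assoc Mᵀ, hM, Matrix.smul_mul,
      Matrix.one_mul, Matrix.mul_smul, hJ]
  -- compare the Gram matrices of the two sides of `key`
  have hgram : (μ * (μ * μ)) • (1 : Matrix ι ι ℝ) = (c * (c * μ)) • 1 := by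
    simpa only [Matrix.transpose_smul, Matrix.smul_mul, Matrix.mul_smul, hJM, hMJ', smul_smul]
      using congrArg (fun A => Aᵀ * A) key
  have hμc : μ = c := by
    have h := smul_left_injective ℝ (one_ne_zero : (1 : Matrix ι ι ℝ) ≠ 0) hgram
    have hsq : μ * μ = c * c := mul_left_cancel₀ hμ.ne' (by linarith)
    nlinarith
  subst hμc
  exact smul_right_injective _ hμ.ne' key

lemma Matrix.commute_of_mul_eq_one {R : Type*} [CommRing R] {J A B : Matrix ι ι R}
    (hAB : A * B = 1) (h : Commute J B) : Commute J A :=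
  Commute.units_inv_right (u := ⟨B, A, mul_eq_one_comm.mp hAB, hAB⟩) h

end LinearAlgebra

section Conformal

variable {U U' : Set (Heis n)} {F G : Heis n → Heis n} {lam : Heis n → ℝ} {p : Heis n}

lemma IsContact.alphaForm_fderiv_eq_zero (hc : IsContact U F lam) (hp : p ∈ U) {v : Heis n}
    (hv : alphaForm p v = 0) : alphaForm (F p) (fderiv ℝ F p v) = 0 := by
  rw [hc.2 p hp v, hv, mul_zero]

lemma commute_Jmat_D0_of_isConformal (hU : IsOpen U) (hF : ContDiffOn ℝ 2 F U)
    (hconf : IsConformal U F lam) (hp : p ∈ U) : Commute (Jmat n) (D0 F p) :=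
  Matrix.commute_of_conformal_of_symplectic Jmat_transpose_mul_self
    (Real.rpow_pos_of_pos (hconf.2.1 p hp) _) (hconf.1.1 p hp) (hconf.2.2 p hp)
    (transpose_D0_mul_Jmat_mul_D0 (hF.contDiffAt (hU.mem_nhds hp))
      (eventually_of_mem (hU.mem_nhds hp) hconf.1.2))

lemma commute_Jmat_D0_of_invOn (hU : IsOpen U) (hU' : IsOpen U') (hF : ContDiffOn ℝ 2 F U)
    (hG : ContDiffOn ℝ 2 G U') (hbij : Set.BijOn F U U') (hinv : Set.InvOn G F U U')
    (hconf : IsConformal U F lam) {q : Heis n} (hq : q ∈ U') : Commute (Jmat n) (D0 G q) := by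
  obtain ⟨p, hp, rfl⟩ := hbij.surjOn hq
  refine Matrix.commute_of_mul_eq_one ?_ (commute_Jmat_D0_of_isConformal hU hF hconf hp)
  exact D0_mul_D0_eq_one ((hF.contDiffAt (hU.mem_nhds hp)).differentiableAt two_ne_zero)
    (fun _ => hconf.1.alphaForm_fderiv_eq_zero hp)
    ((hG.contDiffAt (hU'.mem_nhds hq)).differentiableAt two_ne_zero)
    (eventually_of_mem (hU.mem_nhds hp) hinv.1)

end Conformal

section CRPair

variable {a b : Heis n → ℝ} {p q : Heis n}

/-- In real form, `Z_j (a + i b) = 0` at `q` for every `j`. -/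
def IsCRPairAt (a b : Heis n → ℝ) (q : Heis n) : Prop :=
  ∀ j, Xop j a q = -Yop j b q ∧ Yop j a q = Xop j b q

lemma isCRPairAt_iff_hgrad : IsCRPairAt a b q ↔ hgrad a q = -(Jmat n *ᵥ hgrad b q) := by
  constructor
  · intro h
    ext m
    obtain ⟨j | j, rfl⟩ := (xyEquiv n).surjective m
    · simp [hgrad, Jmat_mulVec_xH, XYop_xH, XYop_yH, (h j).1]
    · simp [hgrad, Jmat_mulVec_yH, XYop_xH, XYop_yH, (h j).2]
  · intro h j
    have hx := congrFun h (xH j)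
    have hy := congrFun h (yH j)
    simp only [hgrad, Pi.neg_apply, Jmat_mulVec_xH, Jmat_mulVec_yH, XYop_xH, XYop_yH,
      neg_neg] at hx hy
    exact ⟨hx, hy⟩

lemma IsCRPairAt.congr (h : IsCRPairAt a b q) {a' b' : Heis n → ℝ} (ha : a =ᶠ[𝓝 q] a')
    (hb : b =ᶠ[𝓝 q] b') : IsCRPairAt a' b' q := by
  intro j
  have hj := h j
  simp only [Xop_eq_derivAlong, Yop_eq_derivAlong] at hj ⊢
  rwa [← derivAlong_congr ha, ← derivAlong_congr ha, ← derivAlong_congr hb,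
    ← derivAlong_congr hb]

lemma IsCRPairAt.neg (h : IsCRPairAt a b q) : IsCRPairAt (fun r => -a r) (fun r => -b r) q := by
  intro j
  have hj := h j
  simp only [Xop_eq_derivAlong, Yop_eq_derivAlong] at hj ⊢
  simpa only [derivAlong_neg, neg_inj] using hj

lemma IsCRPairAt.comp {F : Heis n → Heis n} (h : IsCRPairAt a b (F p))
    (ha : DifferentiableAt ℝ a (F p)) (hb : DifferentiableAt ℝ b (F p))
    (hF : DifferentiableAt ℝ F p)
    (hFα : ∀ v, alphaForm p v = 0 → alphaForm (F p) (fderiv ℝ F p v) = 0)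
    (hJ : Commute (Jmat n) (D0 F p)) :
    IsCRPairAt (fun r => a (F r)) (fun r => b (F r)) p := by
  rw [isCRPairAt_iff_hgrad] at h ⊢
  rw [hgrad_comp hF hFα ha, hgrad_comp hF hFα hb, h, Matrix.neg_vecMul, Jmat_mulVec_vecMul hJ]

lemma isCRPairAt_coord_of_commute {G : Heis n → Heis n} (hG : Commute (Jmat n) (D0 G q))
    (ℓ : Fin n) : IsCRPairAt (fun r => G r (yIdx ℓ)) (fun r => G r (xIdx ℓ)) q := by
  rw [isCRPairAt_iff_hgrad]
  ext m
  have h := congrFun (congrFun hG.eq (xH ℓ)) m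
  have hJQ : (Jmat n * D0 G q) (xH ℓ) m = D0 G q (yH ℓ) m :=
    Jmat_mulVec_xH (fun d => D0 G q d m) ℓ
  have hQJ : (D0 G q * Jmat n) (xH ℓ) m = -(Jmat n *ᵥ D0 G q (xH ℓ)) m :=
    congrFun (vecMul_Jmat (D0 G q (xH ℓ))) m
  rw [hJQ, hQJ] at h
  exact h

lemma IsCRPairAt.derivAlong_rightField (w : Heis n) (ha : ContDiffAt ℝ 2 a q)
    (hb : ContDiffAt ℝ 2 b q) (h : ∀ᶠ q' in 𝓝 q, IsCRPairAt a b q') :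
    IsCRPairAt (derivAlong (fun p => rightField p w) a)
      (derivAlong (fun p => rightField p w) b) q := by
  intro j
  have hX : ∀ᶠ q' in 𝓝 q, Xop j a q' = -Yop j b q' := h.mono fun q' h' => (h' j).1
  have hY : ∀ᶠ q' in 𝓝 q, Yop j a q' = Xop j b q' := h.mono fun q' h' => (h' j).2
  simp only [Xop_eq_derivAlong, Yop_eq_derivAlong] at hX hY ⊢
  rw [derivAlong_leftField_comm_rightField ha, derivAlong_leftField_comm_rightField ha,
    derivAlong_leftField_comm_rightField hb, derivAlong_leftField_comm_rightField hb,
    derivAlong_congr hX, derivAlong_congr hY, derivAlong_neg]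
  exact ⟨rfl, rfl⟩

lemma Zop_congr {u v : Heis n → ℂ} (h : u =ᶠ[𝓝 p] v) (k : Fin n) : Zop k u p = Zop k v p := by
  simp only [Zop, Xop_eq_derivAlong, Yop_eq_derivAlong, derivAlong_congr h]

lemma Zop_const_mul (c : ℂ) (u : Heis n → ℂ) (k : Fin n) :
    Zop k (fun r => c * u r) p = c * Zop k u p := by
  simp only [Zop, Xop_eq_derivAlong, Yop_eq_derivAlong, derivAlong_const_mul]
  ring

lemma Zop_ofReal_add_I_mul {u v : Heis n → ℝ} (hu : DifferentiableAt ℝ u p)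
    (hv : DifferentiableAt ℝ v p) (k : Fin n) :
    Zop k (fun r => (u r : ℂ) + Complex.I * v r) p
      = (1 / 2 : ℂ) * ((Xop k u p + Yop k v p : ℝ) + Complex.I * (Xop k v p - Yop k u p : ℝ)) := by
  have hu' : DifferentiableAt ℝ (fun r => (u r : ℂ)) p :=
    Complex.ofRealCLM.differentiableAt.comp p hu
  have hv' : DifferentiableAt ℝ (fun r => Complex.I * v r) p :=
    (Complex.ofRealCLM.differentiableAt.comp p hv).const_mul _
  have hX : Xop k (fun r => (u r : ℂ) + Complex.I * v r) p
      = Xop k u p + Complex.I * Xop k v p := by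
    simp only [Xop_eq_derivAlong, derivAlong_add hu' hv', derivAlong_const_mul,
      derivAlong_ofReal hu, derivAlong_ofReal hv]
  have hY : Yop k (fun r => (u r : ℂ) + Complex.I * v r) p
      = Yop k u p + Complex.I * Yop k v p := by
    simp only [Yop_eq_derivAlong, derivAlong_add hu' hv', derivAlong_const_mul,
      derivAlong_ofReal hu, derivAlong_ofReal hv]
  rw [Zop, hX, hY]
  push_cast
  linear_combination (-(1 / 2 : ℂ)) * ((Yop k v p : ℝ) : ℂ) * Complex.I_sq

lemma IsCRPairAt.Zop_eq_zero {u v : Heis n → ℝ} (h : IsCRPairAt u v p)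
    (hu : DifferentiableAt ℝ u p) (hv : DifferentiableAt ℝ v p) (k : Fin n) :
    Zop k (fun r => (u r : ℂ) + Complex.I * v r) p = 0 := by
  rw [Zop_ofReal_add_I_mul hu hv, (h k).1, (h k).2]
  simp

lemma Zop_Zop_eq_zero {ψ : Heis n → ℝ} {ℓ : Fin n} (hψ : ∀ᶠ r in 𝓝 p, ContDiffAt ℝ 2 ψ r)
    (h : IsCRPairAt (Xop ℓ ψ) (fun r => -Yop ℓ ψ r) p) (k : Fin n) :
    Zop k (Zop ℓ (fun q => (ψ q : ℂ))) p = 0 := by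
  have hZ : Zop ℓ (fun q => (ψ q : ℂ)) =ᶠ[𝓝 p]
      fun r => (1 / 2 : ℂ) * ((Xop ℓ ψ r : ℝ) + Complex.I * ((-Yop ℓ ψ r : ℝ) : ℂ)) :=
    hψ.mono fun r hr => by
      simp only [Zop, Xop_eq_derivAlong, Yop_eq_derivAlong,
        derivAlong_ofReal (hr.differentiableAt two_ne_zero)]
      push_cast
      ring
  have hX : DifferentiableAt ℝ (Xop ℓ ψ) p := by
    rw [Xop_eq_derivAlong]
    exact hψ.self_of_nhds.differentiableAt_derivAlong (hasFDerivAt_leftField _ p).differentiableAt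
  have hY : DifferentiableAt ℝ (fun r => -Yop ℓ ψ r) p := by
    rw [Yop_eq_derivAlong]
    exact (hψ.self_of_nhds.differentiableAt_derivAlong
      (hasFDerivAt_leftField _ p).differentiableAt).neg
  rw [Zop_congr hZ, Zop_const_mul, h.Zop_eq_zero hX hY, mul_zero]

lemma isCRPairAt_derivAlong_rightField_comp {U U' : Set (Heis n)} {F G : Heis n → Heis n}
    {lam : Heis n → ℝ} (hU : IsOpen U) (hU' : IsOpen U') (hF : ContDiffOn ℝ 2 F U)
    (hG : ContDiffOn ℝ 2 G U') (hbij : Set.BijOn F U U') (hinv : Set.InvOn G F U U')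
    (hconf : IsConformal U F lam) (w : Heis n) (ℓ : Fin n) (hp : p ∈ U) :
    IsCRPairAt (fun r => derivAlong (fun q => rightField q w) (fun q => G q (yIdx ℓ)) (F r))
      (fun r => derivAlong (fun q => rightField q w) (fun q => G q (xIdx ℓ)) (F r)) p := by
  have hq : F p ∈ U' := hbij.mapsTo hp
  have hg : ∀ i, ContDiffAt ℝ 2 (fun q => G q i) (F p) :=
    contDiffAt_pi.1 (hG.contDiffAt (hU'.mem_nhds hq))
  have hR := (hasFDerivAt_rightField w (F p)).differentiableAt
  refine (IsCRPairAt.derivAlong_rightField w (hg _) (hg _) ?_).comp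
    ((hg _).differentiableAt_derivAlong hR) ((hg _).differentiableAt_derivAlong hR)
    ((hF.contDiffAt (hU.mem_nhds hp)).differentiableAt two_ne_zero)
    (fun _ => hconf.1.alphaForm_fderiv_eq_zero hp) (commute_Jmat_D0_of_isConformal hU hF hconf hp)
  filter_upwards [hU'.mem_nhds hq] with q hq'
  exact isCRPairAt_coord_of_commute (commute_Jmat_D0_of_invOn hU hU' hF hG hbij hinv hconf hq') ℓ

end CRPair

end

theorem potential_gives_ZZ_zero_general {n : ℕ}
    (U U' : Set (Heis n)) (hU : IsOpen U) (hU' : IsOpen U')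
    (F G : Heis n → Heis n) (lam : Heis n → ℝ)
    (hF : ContDiffOn ℝ 2 F U) (hG : ContDiffOn ℝ 2 G U')
    (hbij : Set.BijOn F U U') (hinv : Set.InvOn G F U U')
    (hconf : IsConformal U F lam)
    (Wt : (Heis n → ℝ) → Heis n → ℝ)
    (hWt : Wt = Tvf ∨ (∃ j : Fin n, Wt = Xtilde j) ∨ (∃ j : Fin n, Wt = Ytilde j))
    (ψ : Heis n → ℝ) (hψ : ContDiffOn ℝ 2 ψ U)
    (hpot : ∀ ℓ : Fin n, ∀ p ∈ U,
      Wt (fun r => G r (xIdx ℓ)) (F p) = Yop ℓ ψ p ∧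
      Wt (fun r => G r (yIdx ℓ)) (F p) = -Xop ℓ ψ p) :
    ∀ k ℓ : Fin n, ∀ p ∈ U, Zop k (Zop ℓ (fun q => (ψ q : ℂ))) p = 0 := by
  intro k ℓ p hp
  obtain ⟨w, hw⟩ := exists_rightField hWt
  have hcr := isCRPairAt_derivAlong_rightField_comp hU hU' hF hG hbij hinv hconf w ℓ hp
  refine Zop_Zop_eq_zero ?_ (hcr.neg.congr ?_ ?_) k
  · filter_upwards [hU.mem_nhds hp] with r hr using hψ.contDiffAt (hU.mem_nhds hr)
  · filter_upwards [hU.mem_nhds hp] with r hr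
    rw [← hw, (hpot ℓ r hr).2, neg_neg]
  · filter_upwards [hU.mem_nhds hp] with r hr
    rw [← hw, (hpot ℓ r hr).1]

/-- Let `F : U → U'` be a `C²` conformal diffeomorphism with inverse `G`,
and let `W̃` be one of `X̃_1,…,X̃_n, Ỹ_1,…,Ỹ_n, T`. If a `C²` function `ψ : U → ℝ`
satisfies `(W̃ g_ℓ) ∘ F = X_{n+ℓ} ψ` and `(W̃ g_{n+ℓ}) ∘ F = -X_ℓ ψ` on `U` for every
`ℓ = 1,…,n`, then `Z_k Z_ℓ ψ = 0` on `U` for all `1 ≤ k,ℓ ≤ n`. -/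
theorem potential_gives_ZZ_zero {n : ℕ}
    (U U' : Set (Heis n)) (hU : IsOpen U) (hU' : IsOpen U')
    (hUconn : IsConnected U) (hU'conn : IsConnected U')
    (F G : Heis n → Heis n) (lam : Heis n → ℝ)
    (hF : ContDiffOn ℝ 2 F U) (hG : ContDiffOn ℝ 2 G U')
    (hbij : Set.BijOn F U U') (hinv : Set.InvOn G F U U')
    (hconf : IsConformal U F lam)
    (Wt : (Heis n → ℝ) → Heis n → ℝ)
    (hWt : Wt = Tvf ∨ (∃ j : Fin n, Wt = Xtilde j) ∨ (∃ j : Fin n, Wt = Ytilde j))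
    (ψ : Heis n → ℝ) (hψ : ContDiffOn ℝ 2 ψ U)
    (hpot : ∀ ℓ : Fin n, ∀ p ∈ U,
      Wt (fun r => G r (xIdx ℓ)) (F p) = Yop ℓ ψ p ∧
      Wt (fun r => G r (yIdx ℓ)) (F p) = -Xop ℓ ψ p) :
    ∀ k ℓ : Fin n, ∀ p ∈ U, Zop k (Zop ℓ (fun q => (ψ q : ℂ))) p = 0 :=
  potential_gives_ZZ_zero_general U U' hU hU' F G lam hF hG hbij hinv hconf Wt hWt ψ hψ hpot
end
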